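/- arXiv:2410.14819 — 2 statements merged into one kernel-verified Lean document; each statement's English description precedes it below -/
import Mathlib

section
/- For n odd, define F_n ∈ B_{n+1} by F_n = Σ_ℓ Σ_{ε_n, ε_{n+1}} d [λ¹(t(ε_n)) λ¹(t(ε_{n+1}))]^{1/2} / λ⁰(s(ε_n)) · [ℓ ε_n ε_n* ε_{n+1} ε_{n+1}* ℓ*], where ℓ ranges over paths of length n from ⋆ staying in Γ, and ε_n, ε_{n+1} range over edges with source t(ℓ). Then d⁻¹F_n is a self-adjoint idempotent: (d⁻¹F_n)² = d⁻¹F_n and (d⁻¹F_n)* = d⁻¹F_n. -/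
noncomputable section

open scoped BigOperators

/-- A finite bipartite multigraph: even vertices `Vp`, odd vertices `Vm`,
edges directed from even to odd vertices. -/
structure BGraph where
  Vp : Type
  Vm : Type
  E : Type
  [fVp : Fintype Vp]
  [fVm : Fintype Vm]
  [fE : Fintype E]
  [dVp : DecidableEq Vp]
  [dVm : DecidableEq Vm]
  [dE : DecidableEq E]
  src : E → Vp
  tgt : E → Vm

attribute [instance] BGraph.fVp BGraph.fVm BGraph.fE BGraph.dVp BGraph.dVm BGraph.dE

namespace BGraph

/-- Connectedness of a bipartite multigraph. -/
def Conn (Γ : BGraph) : Prop :=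
  ∀ (S : Finset Γ.Vp) (T : Finset Γ.Vm),
    (∀ ε : Γ.E, (Γ.src ε ∈ S ↔ Γ.tgt ε ∈ T)) →
    (S = ∅ ∧ T = ∅) ∨ (S = Finset.univ ∧ T = Finset.univ)

/-- Compatibility of consecutive edges of an alternating path
`ε₁ε₂*ε₃ε₄*⋯` (0-based: edges at even positions are traversed forwards,
edges at odd positions backwards). -/
def Compatible (Γ : BGraph) (n : ℕ) (f : Fin n → Γ.E) : Prop :=
  ∀ i j : Fin n, (j : ℕ) = (i : ℕ) + 1 →
    (((i : ℕ) % 2 = 0 → Γ.tgt (f i) = Γ.tgt (f j)) ∧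
     ((i : ℕ) % 2 = 1 → Γ.src (f i) = Γ.src (f j)))

instance {Γ : BGraph} (n : ℕ) : DecidablePred (Γ.Compatible n) := fun _ => by
  unfold Compatible; infer_instance

/-- A pair (base vertex, list of edges) is a valid alternating path if it starts
at the base vertex and consecutive edges match up. -/
def PathOk (Γ : BGraph) (n : ℕ) (p : Γ.Vp × (Fin n → Γ.E)) : Prop :=
  (∀ i : Fin n, (i : ℕ) = 0 → Γ.src (p.2 i) = p.1) ∧ Γ.Compatible n p.2

instance {Γ : BGraph} (n : ℕ) : DecidablePred (Γ.PathOk n) := fun _ => by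
  unfold PathOk; infer_instance

/-- Alternating paths of length `n` in `Γ` starting at an even vertex. -/
def GPath (Γ : BGraph) (n : ℕ) := {p : Γ.Vp × (Fin n → Γ.E) // Γ.PathOk n p}

instance {Γ : BGraph} (n : ℕ) : Fintype (Γ.GPath n) := Subtype.fintype _
instance {Γ : BGraph} (n : ℕ) : DecidableEq (Γ.GPath n) :=
  inferInstanceAs (DecidableEq {p : Γ.Vp × (Fin n → Γ.E) // Γ.PathOk n p})

/-- Starting (even) vertex of a path. -/
def pstart (Γ : BGraph) {n : ℕ} (p : Γ.GPath n) : Γ.Vp := p.1.1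

/-- Endpoint of a path (an even vertex if the length is even, odd otherwise). -/
def pend (Γ : BGraph) : {n : ℕ} → Γ.GPath n → Γ.Vp ⊕ Γ.Vm
  | 0, p => Sum.inl p.1.1
  | (k+1), p =>
      if (k+1) % 2 = 1 then Sum.inr (Γ.tgt (p.1.2 ⟨k, Nat.lt_succ_self k⟩))
      else Sum.inl (Γ.src (p.1.2 ⟨k, Nat.lt_succ_self k⟩))

/-- Last edge of a path of positive length. -/
def lastEdge (Γ : BGraph) {n : ℕ} (p : Γ.GPath (n+1)) : Γ.E :=
  p.1.2 ⟨n, Nat.lt_succ_self n⟩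

theorem pend_eq_last (Γ : BGraph) {n : ℕ} (p : Γ.GPath (n+1)) :
    Γ.pend p = if (n+1) % 2 = 1 then Sum.inr (Γ.tgt (Γ.lastEdge p))
      else Sum.inl (Γ.src (Γ.lastEdge p)) := rfl

/-- Loops of length `2n` based at an even vertex, written as a pair of paths
`[ℓ₁ℓ₂*]` with common start and common end. -/
def GLoop (Γ : BGraph) (n : ℕ) :=
  {q : Γ.GPath n × Γ.GPath n // Γ.pstart q.1 = Γ.pstart q.2 ∧ Γ.pend q.1 = Γ.pend q.2}

instance {Γ : BGraph} (n : ℕ) : Fintype (Γ.GLoop n) := by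
  unfold GLoop; infer_instance
instance {Γ : BGraph} (n : ℕ) : DecidableEq (Γ.GLoop n) := by
  unfold GLoop; infer_instance

/-- The loop algebra `G_{n,+}`: formal complex linear combinations of loops. -/
abbrev LoopAlg (Γ : BGraph) (n : ℕ) := Γ.GLoop n → ℂ

/-- Multiplication of the loop algebra : `[ℓ₁ℓ₂*]·[ℓ₃ℓ₄*] = δ_{ℓ₂,ℓ₃}[ℓ₁ℓ₄*]`. -/
def lmul (Γ : BGraph) {n : ℕ} (x y : Γ.LoopAlg n) : Γ.LoopAlg n := fun q =>
  ∑ p : Γ.GPath n,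
    if h : Γ.pstart q.1.1 = Γ.pstart p ∧ Γ.pend q.1.1 = Γ.pend p then
      x ⟨(q.1.1, p), h⟩ *
      y ⟨(p, q.1.2), ⟨h.1.symm.trans q.2.1, h.2.symm.trans q.2.2⟩⟩
    else 0

/-- The unit of the loop algebra: the sum `∑_p [p p*]` over all paths `p`. -/
def lone (Γ : BGraph) (n : ℕ) : Γ.LoopAlg n := fun q =>
  if q.1.1 = q.1.2 then 1 else 0

/-- The involution of the loop algebra: antilinear extension of loop reversal
`[ℓ₁ℓ₂*]* = [ℓ₂ℓ₁*]`. -/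
def lstar (Γ : BGraph) {n : ℕ} (x : Γ.LoopAlg n) : Γ.LoopAlg n := fun q =>
  starRingEnd ℂ (x ⟨(q.1.2, q.1.1), ⟨q.2.1.symm, q.2.2.symm⟩⟩)

/-- Number of paths of length `n` ending at a given vertex. -/
def pcount (Γ : BGraph) (n : ℕ) (v : Γ.Vp ⊕ Γ.Vm) : ℕ :=
  Fintype.card {p : Γ.GPath n // Γ.pend p = v}

/-- Augmentation edges over an even vertex `v` : there are `m v` of them. -/
def Aug (Γ : BGraph) (m : Γ.Vp → ℕ) := Σ v : Γ.Vp, Fin (m v)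

instance {Γ : BGraph} (m : Γ.Vp → ℕ) : Fintype (Γ.Aug m) := by
  unfold Aug; infer_instance
instance {Γ : BGraph} (m : Γ.Vp → ℕ) : DecidableEq (Γ.Aug m) := by
  unfold Aug; infer_instance

/-- Loops of length `2n+2` in the augmented graph `Γ̃` based at `⋆` which stay
in `Γ` except for the first and last (augmentation) edge, written as a pair of
halves `(η, ℓ₁)`, `(ρ, ℓ₂)`. -/
def BLoopOk (Γ : BGraph) (m : Γ.Vp → ℕ) (n : ℕ)
    (q : (Γ.Aug m × Γ.GPath n) × (Γ.Aug m × Γ.GPath n)) : Prop :=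
  q.1.1.1 = Γ.pstart q.1.2 ∧ q.2.1.1 = Γ.pstart q.2.2 ∧ Γ.pend q.1.2 = Γ.pend q.2.2

def BLoop (Γ : BGraph) (m : Γ.Vp → ℕ) (n : ℕ) :=
  {q : (Γ.Aug m × Γ.GPath n) × (Γ.Aug m × Γ.GPath n) // Γ.BLoopOk m n q}

instance {Γ : BGraph} (m : Γ.Vp → ℕ) (n : ℕ) : Fintype (Γ.BLoop m n) := by
  unfold BLoop BLoopOk; infer_instance
instance {Γ : BGraph} (m : Γ.Vp → ℕ) (n : ℕ) : DecidableEq (Γ.BLoop m n) := by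
  unfold BLoop; infer_instance

/-- The loop algebra `B_n` of the augmented graph. -/
abbrev BAlg (Γ : BGraph) (m : Γ.Vp → ℕ) (n : ℕ) := Γ.BLoop m n → ℂ

/-- Multiplication `[ℓ₁ℓ₂*]·[ℓ₃ℓ₄*] = δ_{ℓ₂,ℓ₃}[ℓ₁ℓ₄*]` of `B_n`. -/
def bmul (Γ : BGraph) (m : Γ.Vp → ℕ) {n : ℕ} (x y : Γ.BAlg m n) : Γ.BAlg m n := fun q =>
  ∑ a : Γ.Aug m, ∑ p : Γ.GPath n,
    if h : a.1 = Γ.pstart p ∧ Γ.pend q.1.1.2 = Γ.pend p then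
      x ⟨(q.1.1, (a, p)), ⟨q.2.1, h.1, h.2⟩⟩ *
      y ⟨((a, p), q.1.2), ⟨h.1, q.2.2.1, h.2.symm.trans q.2.2.2⟩⟩
    else 0

/-- The unit of `B_n`. -/
def bone (Γ : BGraph) (m : Γ.Vp → ℕ) (n : ℕ) : Γ.BAlg m n := fun q =>
  if q.1.1 = q.1.2 then 1 else 0

/-- The involution of `B_n`. -/
def bstar (Γ : BGraph) (m : Γ.Vp → ℕ) {n : ℕ} (x : Γ.BAlg m n) : Γ.BAlg m n := fun q =>
  starRingEnd ℂ (x ⟨(q.1.2, q.1.1), ⟨q.2.2.1, q.2.1, q.2.2.2.symm⟩⟩)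

/-- Truncation of a path, forgetting the last edge. -/
def trunc (Γ : BGraph) {n : ℕ} (p : Γ.GPath (n+1)) : Γ.GPath n :=
  ⟨(p.1.1, fun i => p.1.2 i.castSucc), by
    constructor
    · intro i hi0
      exact p.2.1 i.castSucc (by simpa using hi0)
    · intro i j hij
      have := p.2.2 i.castSucc j.castSucc (by simpa using hij)
      simpa using this⟩

theorem pend_trunc_of_last_eq (Γ : BGraph) {n : ℕ} (p q : Γ.GPath (n+1))
    (hpq : Γ.pend p = Γ.pend q) (hl : Γ.lastEdge p = Γ.lastEdge q) :
    Γ.pend (Γ.trunc p) = Γ.pend (Γ.trunc q) := by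
  cases n with
  | zero =>
    have hp := p.2.1 ⟨0, Nat.zero_lt_one⟩ rfl
    have hq := q.2.1 ⟨0, Nat.zero_lt_one⟩ rfl
    have hbase : p.1.1 = q.1.1 := by
      rw [← hp, ← hq]; exact congrArg Γ.src hl
    show Sum.inl p.1.1 = Sum.inl q.1.1
    rw [hbase]
  | succ k =>
    have cp := p.2.2 ⟨k, by omega⟩ ⟨k+1, by omega⟩ rfl
    have cq := q.2.2 ⟨k, by omega⟩ ⟨k+1, by omega⟩ rfl
    have hl' : p.1.2 ⟨k+1, by omega⟩ = q.1.2 ⟨k+1, by omega⟩ := hl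
    have ep : Γ.pend (Γ.trunc p) =
        (if (k+1) % 2 = 1 then Sum.inr (Γ.tgt (p.1.2 ⟨k, by omega⟩))
         else Sum.inl (Γ.src (p.1.2 ⟨k, by omega⟩))) := rfl
    have eq' : Γ.pend (Γ.trunc q) =
        (if (k+1) % 2 = 1 then Sum.inr (Γ.tgt (q.1.2 ⟨k, by omega⟩))
         else Sum.inl (Γ.src (q.1.2 ⟨k, by omega⟩))) := rfl
    rw [ep, eq']
    by_cases hk : (k+1) % 2 = 1
    · have hk0 : k % 2 = 0 := by omega
      rw [if_pos hk, if_pos hk, cp.1 hk0, cq.1 hk0, hl']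
    · have hk1 : k % 2 = 1 := by omega
      rw [if_neg hk, if_neg hk, cp.2 hk1, cq.2 hk1, hl']

/-- The inclusion `ι : B_n → B_{n+1}`, `[ℓ₁ℓ₂*] ↦ ∑_ε [ℓ₁εε*ℓ₂*]`. -/
def bincl (Γ : BGraph) (m : Γ.Vp → ℕ) {n : ℕ} (x : Γ.BAlg m n) : Γ.BAlg m (n+1) := fun q =>
  if h : Γ.lastEdge q.1.1.2 = Γ.lastEdge q.1.2.2 then
    x ⟨((q.1.1.1, Γ.trunc q.1.1.2), (q.1.2.1, Γ.trunc q.1.2.2)),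
      ⟨q.2.1, q.2.2.1, Γ.pend_trunc_of_last_eq _ _ q.2.2.2 h⟩⟩
  else 0

/-- Iterated inclusion `B_a → B_b` for `a ≤ b`. -/
def binclLe (Γ : BGraph) (m : Γ.Vp → ℕ) {a b : ℕ} (h : a ≤ b) (x : Γ.BAlg m a) :
    Γ.BAlg m b :=
  Nat.leRecOn h (fun {_} y => Γ.bincl m y) x

/-- An edge `ε` can be appended to the path `p`. -/
def Matches (Γ : BGraph) {n : ℕ} (p : Γ.GPath n) (ε : Γ.E) : Prop :=
  (n % 2 = 0 → Γ.pend p = Sum.inl (Γ.src ε)) ∧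
  (n % 2 = 1 → Γ.pend p = Sum.inr (Γ.tgt ε))

instance {Γ : BGraph} {n : ℕ} (p : Γ.GPath n) (ε : Γ.E) : Decidable (Γ.Matches p ε) := by
  unfold Matches; infer_instance

theorem matches_congr (Γ : BGraph) {n : ℕ} {p p' : Γ.GPath n}
    (h : Γ.pend p = Γ.pend p') {ε : Γ.E} (hm : Γ.Matches p ε) : Γ.Matches p' ε :=
  ⟨fun h0 => h.symm.trans (hm.1 h0), fun h1 => h.symm.trans (hm.2 h1)⟩

/-- For paths of positive length, the endpoint in terms of the last edge. -/
theorem pend_pos (Γ : BGraph) {n : ℕ} (p : Γ.GPath n) (hpos : 0 < n) :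
    Γ.pend p = if n % 2 = 1 then Sum.inr (Γ.tgt (p.1.2 ⟨n-1, by omega⟩))
      else Sum.inl (Γ.src (p.1.2 ⟨n-1, by omega⟩)) := by
  cases n with
  | zero => omega
  | succ k => rfl

/-- Appending an edge to a path. -/
def psnoc (Γ : BGraph) {n : ℕ} (p : Γ.GPath n) (ε : Γ.E) (h : Γ.Matches p ε) :
    Γ.GPath (n+1) :=
  ⟨(p.1.1, Fin.snoc p.1.2 ε), by
    constructor
    · intro i hi0
      dsimp only
      by_cases hin : (i : ℕ) < n
      · have hi' : i = Fin.castSucc ⟨(i : ℕ), hin⟩ := by ext; simp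
        rw [hi', Fin.snoc_castSucc]
        exact p.2.1 ⟨(i : ℕ), hin⟩ hi0
      · have hn0 : n = 0 := by have := i.isLt; omega
        subst hn0
        have hi' : i = Fin.last 0 := by ext; simpa using hi0
        rw [hi', Fin.snoc_last]
        have h0 : (Sum.inl p.1.1 : Γ.Vp ⊕ Γ.Vm) = Sum.inl (Γ.src ε) := h.1 rfl
        exact (Sum.inl.inj h0).symm
    · intro i j hij
      dsimp only
      by_cases hjn : (j : ℕ) < n
      · have hin : (i : ℕ) < n := by omega
        have hi' : i = Fin.castSucc ⟨(i : ℕ), hin⟩ := by ext; simp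
        have hj' : j = Fin.castSucc ⟨(j : ℕ), hjn⟩ := by ext; simp
        rw [hi', hj', Fin.snoc_castSucc, Fin.snoc_castSucc]
        exact p.2.2 ⟨(i : ℕ), hin⟩ ⟨(j : ℕ), hjn⟩ hij
      · have hjn' : (j : ℕ) = n := by have := j.isLt; omega
        have hin : (i : ℕ) < n := by omega
        have hpos : 0 < n := by omega
        have hpend := Γ.pend_pos p hpos
        have hidx : (⟨n-1, by omega⟩ : Fin n) = ⟨(i : ℕ), hin⟩ := by
          ext; simp; omega
        rw [hidx] at hpend
        have hi' : i = Fin.castSucc ⟨(i : ℕ), hin⟩ := by ext; simp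
        have hj' : j = Fin.last n := by ext; simpa using hjn'
        rw [hi', hj', Fin.snoc_castSucc, Fin.snoc_last]
        constructor
        · intro hpar
          have hn2 : n % 2 = 1 := by omega
          have hmm := h.2 hn2
          rw [hpend, if_pos hn2] at hmm
          exact Sum.inr.inj hmm
        · intro hpar
          have hn2 : n % 2 = 0 := by omega
          have hn2' : ¬ n % 2 = 1 := by omega
          have hmm := h.1 hn2
          rw [hpend, if_neg hn2'] at hmm
          exact Sum.inl.inj hmm⟩

theorem pend_psnoc (Γ : BGraph) {n : ℕ} (p : Γ.GPath n) (ε : Γ.E) (h : Γ.Matches p ε) :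
    Γ.pend (Γ.psnoc p ε h) =
      if (n+1) % 2 = 1 then Sum.inr (Γ.tgt ε) else Sum.inl (Γ.src ε) := by
  have hlast : Γ.lastEdge (Γ.psnoc p ε h) = ε := by
    unfold lastEdge psnoc
    dsimp only
    exact Fin.snoc_last _ _
  rw [Γ.pend_eq_last, hlast]

/-- The trace-preserving conditional expectation `B_{n+1} → B_n` (Jones–Penneys
formula). -/
def bCondExp (Γ : BGraph) (m : Γ.Vp → ℕ) (l0 : Γ.Vp → ℝ) (l1 : Γ.Vm → ℝ) (d : ℝ)
    {n : ℕ} (x : Γ.BAlg m (n+1)) : Γ.BAlg m n := fun q =>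
  ∑ ε : Γ.E,
    if h : Γ.Matches q.1.1.2 ε then
      (((if (n+1) % 2 = 0 then (d ^ 2)⁻¹ * l0 (Γ.src ε) / l1 (Γ.tgt ε)
          else l1 (Γ.tgt ε) / l0 (Γ.src ε)) : ℝ) : ℂ) *
      x ⟨((q.1.1.1, Γ.psnoc q.1.1.2 ε h),
          (q.1.2.1, Γ.psnoc q.1.2.2 ε (Γ.matches_congr q.2.2.2 h))),
        ⟨q.2.1, q.2.2.1, by rw [Γ.pend_psnoc, Γ.pend_psnoc]⟩⟩
    else 0

/-- The trace vector of `B_n` : `λⁿ = d⁻ⁿλ⁰` on even vertices and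
`d^{1-n}λ¹` on odd vertices. -/
def lamN (Γ : BGraph) (l0 : Γ.Vp → ℝ) (l1 : Γ.Vm → ℝ) (d : ℝ) (n : ℕ) :
    Γ.Vp ⊕ Γ.Vm → ℝ
  | Sum.inl u => d ^ (-(n : ℤ)) * l0 u
  | Sum.inr v => d ^ (1 - (n : ℤ)) * l1 v

/-- The trace on `B_n` with weight `w` : `tr([ℓ₁ℓ₂*]) = δ_{ℓ₁,ℓ₂} w(t(ℓ₁))`. -/
def btr (Γ : BGraph) (m : Γ.Vp → ℕ) {n : ℕ} (w : Γ.Vp ⊕ Γ.Vm → ℝ)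
    (x : Γ.BAlg m n) : ℂ :=
  ∑ L : Γ.BLoop m n, if L.1.1 = L.1.2 then x L * ((w (Γ.pend L.1.1.2) : ℝ) : ℂ) else 0

/-- The Jones projection element `F_n ∈ B_{n+1}`:
`F_n = ∑_ℓ ∑_{ε,ε'} c(ε,ε') [ℓ ε ε* ε' ε'* ℓ*]`. -/
def FJones (Γ : BGraph) (m : Γ.Vp → ℕ) (l0 : Γ.Vp → ℝ) (l1 : Γ.Vm → ℝ) (d : ℝ)
    (n : ℕ) : Γ.BAlg m (n+1) := fun L =>
  if L.1.1.1 = L.1.2.1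
      ∧ (∀ i : Fin (n+1), (i : ℕ) + 1 < n → L.1.1.2.1.2 i = L.1.2.2.1.2 i)
      ∧ (∀ i j : Fin (n+1), (i : ℕ) + 1 = n → (j : ℕ) = n →
          L.1.1.2.1.2 i = L.1.1.2.1.2 j ∧ L.1.2.2.1.2 i = L.1.2.2.1.2 j) then
    (((if n % 2 = 1 then
        d * Real.sqrt (l1 (Γ.tgt (Γ.lastEdge L.1.1.2)) * l1 (Γ.tgt (Γ.lastEdge L.1.2.2)))
          / l0 (Γ.src (Γ.lastEdge L.1.1.2))
      else
        Real.sqrt (l0 (Γ.src (Γ.lastEdge L.1.1.2)) * l0 (Γ.src (Γ.lastEdge L.1.2.2)))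
          / (d * l1 (Γ.tgt (Γ.lastEdge L.1.1.2)))) : ℝ) : ℂ)
  else 0

/-- The length-one path determined by an edge. -/
def mkPath1 (Γ : BGraph) (ε : Γ.E) : Γ.GPath 1 :=
  ⟨(Γ.src ε, fun _ => ε), by
    constructor
    · intro _ _; rfl
    · intro i j hij
      exfalso
      have := i.isLt; have := j.isLt; omega⟩

/-- The adjacency matrix of `Γ` (entries: numbers of edges). -/
def adjMat (Γ : BGraph) : Matrix Γ.Vp Γ.Vm ℝ :=
  Matrix.of fun u w => (Fintype.card {ε : Γ.E // Γ.src ε = u ∧ Γ.tgt ε = w} : ℝ)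

end BGraph

/-! Index the loops of `B_{n+1}` by their two halves (augmentation edge, path); then `B_{n+1}`
is a corner of a full matrix algebra, in which the product and involution become the matrix
product and conjugate transpose. For `n` odd, `d⁻¹F_n` is block diagonal: two halves lie in the
same block when they agree after deleting a final backtrack `εε*`, and on the block of such a
half `ℓ` it is the outer product of `v(ℓεε*) = (λ¹(t ε)/λ⁰(s ε))^{1/2}` with itself. The
Markov condition `Λλ¹ = λ⁰` says exactly that each `v` is a unit vector, so each block is a
rank-one projection. -/

theorem Real.sqrt_div_mul_sqrt_div {a c : ℝ} (b : ℝ) (ha : 0 ≤ a) (hc : 0 ≤ c) :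
    √(a / c) * √(b / c) = √(a * b) / c := by
  rw [Real.sqrt_div' a hc, Real.sqrt_div' b hc, div_mul_div_comm, Real.mul_self_sqrt hc,
    Real.sqrt_mul ha]

section FiberVecMulVec

open scoped Matrix

variable {ι K R : Type*} [DecidableEq K]

def fiberVecMulVec [Mul R] [Zero R] (κ : ι → K) (v : ι → R) : Matrix ι ι R :=
  Matrix.of fun x y => if κ x = κ y then v x * v y else 0

theorem fiberVecMulVec_mul_self [Fintype ι] [CommSemiring R] (κ : ι → K) (v : ι → R)
    (hv : ∀ x, v x ≠ 0 → ∑ y with κ y = κ x, v y ^ 2 = 1) :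
    fiberVecMulVec κ v * fiberVecMulVec κ v = fiberVecMulVec κ v := by
  ext x z
  simp only [Matrix.mul_apply, fiberVecMulVec, Matrix.of_apply]
  by_cases hxz : κ x = κ z
  · have hterm : ∀ y, (if κ x = κ y then v x * v y else 0) * (if κ y = κ z then v y * v z else 0)
        = v x * v z * (if κ y = κ x then v y ^ 2 else 0) := by
      intro y
      by_cases hyx : κ y = κ x
      · rw [if_pos hyx.symm, if_pos (hyx.trans hxz), if_pos hyx]
        ring
      · rw [if_neg (Ne.symm hyx), if_neg hyx, zero_mul, mul_zero]
    rw [Finset.sum_congr rfl fun y _ => hterm y, ← Finset.mul_sum, ← Finset.sum_filter,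
      if_pos hxz]
    by_cases hx : v x = 0
    · rw [hx, zero_mul, zero_mul]
    · rw [hv x hx, mul_one]
  · rw [if_neg hxz]
    refine Finset.sum_eq_zero fun y _ => ?_
    by_cases hxy : κ x = κ y
    · rw [if_neg fun hyz => hxz (hxy.trans hyz), mul_zero]
    · rw [if_neg hxy, zero_mul]

theorem conjTranspose_fiberVecMulVec [CommSemiring R] [StarRing R] (κ : ι → K) (v : ι → R) :
    (fiberVecMulVec κ v)ᴴ = fiberVecMulVec κ (star v) := by
  ext x y
  simp only [Matrix.conjTranspose_apply, fiberVecMulVec, Matrix.of_apply, eq_comm (a := κ y)]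
  split_ifs
  · rw [star_mul', mul_comm, Pi.star_apply, Pi.star_apply]
  · exact star_zero R

end FiberVecMulVec

namespace BGraph

open scoped Matrix

variable {Γ : BGraph} {m : Γ.Vp → ℕ} {n k : ℕ}

theorem lastEdge_psnoc (p : Γ.GPath n) (ε : Γ.E) (h : Γ.Matches p ε) :
    Γ.lastEdge (Γ.psnoc p ε h) = ε :=
  Fin.snoc_last (α := fun _ => Γ.E) _ _

theorem trunc_psnoc (p : Γ.GPath n) (ε : Γ.E) (h : Γ.Matches p ε) :
    Γ.trunc (Γ.psnoc p ε h) = p :=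
  Subtype.ext (Prod.ext rfl (Fin.init_snoc (α := fun _ => Γ.E) _ _))

theorem matches_trunc_lastEdge (p : Γ.GPath (n + 1)) :
    Γ.Matches (Γ.trunc p) (Γ.lastEdge p) := by
  cases n with
  | zero => exact ⟨fun _ => congrArg Sum.inl (p.2.1 0 rfl).symm, fun h => by simp at h⟩
  | succ j =>
    have hcompat := p.2.2 ⟨j, by omega⟩ ⟨j + 1, by omega⟩ rfl
    refine ⟨fun heven => ?_, fun hodd => ?_⟩
    · show (if (j + 1) % 2 = 1 then _ else _) = _
      rw [if_neg (by omega)]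
      exact congrArg Sum.inl (hcompat.2 (show j % 2 = 1 by omega))
    · show (if (j + 1) % 2 = 1 then _ else _) = _
      rw [if_pos hodd]
      exact congrArg Sum.inr (hcompat.1 (show j % 2 = 0 by omega))

theorem psnoc_trunc (p : Γ.GPath (n + 1)) :
    Γ.psnoc (Γ.trunc p) (Γ.lastEdge p) (matches_trunc_lastEdge p) = p :=
  Subtype.ext (Prod.ext rfl (Fin.snoc_init_self (α := fun _ => Γ.E) _))

theorem psnoc_eq_of_eq_trunc {q : Γ.GPath n} {ε : Γ.E} (h : Γ.Matches q ε)
    {p : Γ.GPath (n + 1)} (hq : q = Γ.trunc p) (hε : ε = Γ.lastEdge p) : Γ.psnoc q ε h = p := by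
  subst hq hε
  exact psnoc_trunc p

theorem matches_psnoc_self (p : Γ.GPath n) (ε : Γ.E) (h : Γ.Matches p ε) :
    Γ.Matches (Γ.psnoc p ε h) ε := by
  refine ⟨fun heven => ?_, fun hodd => ?_⟩ <;> rw [Γ.pend_psnoc]
  · rw [if_neg (by omega)]
  · rw [if_pos hodd]

def EndsWithBacktrack (p : Γ.GPath (n + 2)) : Prop :=
  Γ.lastEdge (Γ.trunc p) = Γ.lastEdge p

instance : DecidablePred (EndsWithBacktrack (Γ := Γ) (n := n)) := fun p =>
  inferInstanceAs (Decidable (Γ.lastEdge (Γ.trunc p) = Γ.lastEdge p))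

theorem pend_trunc_trunc_of_endsWithBacktrack {p : Γ.GPath (n + 2)}
    (hp : EndsWithBacktrack p) : Γ.pend (Γ.trunc (Γ.trunc p)) = Γ.pend p := by
  have hmatch := matches_trunc_lastEdge (Γ.trunc p)
  rw [hp] at hmatch
  rw [Γ.pend_eq_last]
  rcases Nat.mod_two_eq_zero_or_one n with hn | hn
  · rw [hmatch.1 hn, if_neg (by omega)]
  · rw [hmatch.2 hn, if_pos (by omega)]

def backtrackExt (q : Γ.GPath n) (ε : Γ.E) (h : Γ.Matches q ε) : Γ.GPath (n + 2) :=
  Γ.psnoc (Γ.psnoc q ε h) ε (matches_psnoc_self q ε h)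

theorem endsWithBacktrack_backtrackExt (q : Γ.GPath n) (ε : Γ.E) (h : Γ.Matches q ε) :
    EndsWithBacktrack (backtrackExt q ε h) := by
  unfold EndsWithBacktrack backtrackExt
  rw [trunc_psnoc, lastEdge_psnoc, lastEdge_psnoc]

theorem trunc_trunc_backtrackExt (q : Γ.GPath n) (ε : Γ.E) (h : Γ.Matches q ε) :
    Γ.trunc (Γ.trunc (backtrackExt q ε h)) = q := by
  unfold backtrackExt
  rw [trunc_psnoc, trunc_psnoc]

theorem backtrackExt_trunc_trunc {p : Γ.GPath (n + 2)} (hp : EndsWithBacktrack p)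
    (h : Γ.Matches (Γ.trunc (Γ.trunc p)) (Γ.lastEdge p)) :
    backtrackExt (Γ.trunc (Γ.trunc p)) (Γ.lastEdge p) h = p :=
  psnoc_eq_of_eq_trunc _ (psnoc_eq_of_eq_trunc _ rfl hp.symm) rfl

theorem sum_endsWithBacktrack_lastEdge {M : Type*} [AddCommMonoid M] (q : Γ.GPath n)
    (f : Γ.E → M) :
    ∑ p with Γ.trunc (Γ.trunc p) = q ∧ EndsWithBacktrack p, f (Γ.lastEdge p) =
      ∑ ε with Γ.Matches q ε, f ε := by
  symm
  refine Finset.sum_bij' (fun ε hε => backtrackExt q ε (Finset.mem_filter.1 hε).2)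
    (fun p _ => Γ.lastEdge p) (fun ε _ => ?_) (fun p hp => ?_) (fun ε _ => ?_)
    (fun p hp => ?_) (fun ε _ => ?_)
  · exact Finset.mem_filter.2 ⟨Finset.mem_univ _,
      trunc_trunc_backtrackExt .., endsWithBacktrack_backtrackExt ..⟩
  · obtain ⟨rfl, hback⟩ := (Finset.mem_filter.1 hp).2
    rw [Finset.mem_filter, ← hback]
    exact ⟨Finset.mem_univ _, matches_trunc_lastEdge _⟩
  · exact lastEdge_psnoc ..
  · obtain ⟨rfl, hback⟩ := (Finset.mem_filter.1 hp).2
    exact backtrackExt_trunc_trunc hback _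
  · rw [backtrackExt, lastEdge_psnoc]

theorem src_lastEdge_eq_of_pend_eq {p q : Γ.GPath (2 * k + 1 + 1)}
    (h : Γ.pend p = Γ.pend q) : Γ.src (Γ.lastEdge p) = Γ.src (Γ.lastEdge q) := by
  rw [Γ.pend_eq_last, Γ.pend_eq_last, if_neg (by omega), if_neg (by omega)] at h
  exact Sum.inl.inj h

theorem matches_trunc_trunc_iff {p : Γ.GPath (2 * k + 1 + 1)} (hp : EndsWithBacktrack p)
    (ε : Γ.E) : Γ.Matches (Γ.trunc (Γ.trunc p)) ε ↔ Γ.src ε = Γ.src (Γ.lastEdge p) := by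
  rw [Matches, pend_trunc_trunc_of_endsWithBacktrack hp, Γ.pend_eq_last, if_neg (by omega)]
  simp only [Nat.mul_mod_right, true_implies, zero_ne_one, false_implies, and_true,
    Sum.inl.injEq]
  exact eq_comm

instance : DecidablePred (Γ.BLoopOk m n) := fun _ => by
  unfold BLoopOk; infer_instance

def toMatrix (x : Γ.BAlg m n) : Matrix (Γ.Aug m × Γ.GPath n) (Γ.Aug m × Γ.GPath n) ℂ :=
  Matrix.of fun h₁ h₂ => if h : Γ.BLoopOk m n (h₁, h₂) then x ⟨(h₁, h₂), h⟩ else 0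

theorem toMatrix_injective : Function.Injective (toMatrix (Γ := Γ) (m := m) (n := n)) := by
  intro x y hxy
  funext ⟨⟨h₁, h₂⟩, hL⟩
  have h := congrFun (congrFun hxy h₁) h₂
  simpa only [toMatrix, Matrix.of_apply, dif_pos hL] using h

theorem toMatrix_smul (c : ℂ) (x : Γ.BAlg m n) : toMatrix (c • x) = c • toMatrix x := by
  ext h₁ h₂
  simp only [toMatrix, Matrix.of_apply, Matrix.smul_apply]
  split_ifs
  · rfl
  · exact (smul_zero c).symm

theorem toMatrix_bmul (x y : Γ.BAlg m n) :
    toMatrix (Γ.bmul m x y) = toMatrix x * toMatrix y := by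
  ext h₁ h₂
  simp only [toMatrix, Matrix.of_apply, Matrix.mul_apply, Fintype.sum_prod_type]
  by_cases h : Γ.BLoopOk m n (h₁, h₂)
  · rw [dif_pos h]
    refine Finset.sum_congr rfl fun a _ => Finset.sum_congr rfl fun p _ => ?_
    by_cases hap : a.1 = Γ.pstart p ∧ Γ.pend h₁.2 = Γ.pend p
    · rw [dif_pos hap, dif_pos ⟨h.1, hap⟩, dif_pos ⟨hap.1, h.2.1, hap.2.symm.trans h.2.2⟩]
    · rw [dif_neg hap, dif_neg fun h' => hap h'.2, zero_mul]
  · rw [dif_neg h]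
    refine (Finset.sum_eq_zero fun a _ => Finset.sum_eq_zero fun p _ => ?_).symm
    by_cases h₁p : Γ.BLoopOk m n (h₁, (a, p))
    · have hp₂ : ¬ Γ.BLoopOk m n ((a, p), h₂) := fun hp₂ =>
        h ⟨h₁p.1, hp₂.2.1, h₁p.2.2.trans hp₂.2.2⟩
      rw [dif_neg hp₂, mul_zero]
    · rw [dif_neg h₁p, zero_mul]

theorem toMatrix_bstar (x : Γ.BAlg m n) : toMatrix (Γ.bstar m x) = (toMatrix x)ᴴ := by
  ext h₁ h₂
  simp only [toMatrix, Matrix.of_apply, Matrix.conjTranspose_apply]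
  by_cases h : Γ.BLoopOk m n (h₁, h₂)
  · rw [dif_pos h, dif_pos ⟨h.2.1, h.1, h.2.2.symm⟩]
    rfl
  · rw [dif_neg h, dif_neg fun h' => h ⟨h'.2.1, h'.1, h'.2.2.symm⟩, star_zero]

/-- `[ℓ₁ℓ₂*]` has the form `[ℓ ε ε* ε' ε'* ℓ*]` of the loops in `F_n`. -/
def JonesSupport (n : ℕ) (x y : Γ.Aug m × Γ.GPath (n + 1)) : Prop :=
  x.1 = y.1
    ∧ (∀ i : Fin (n+1), (i : ℕ) + 1 < n → x.2.1.2 i = y.2.1.2 i)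
    ∧ (∀ i j : Fin (n+1), (i : ℕ) + 1 = n → (j : ℕ) = n →
        x.2.1.2 i = x.2.1.2 j ∧ y.2.1.2 i = y.2.1.2 j)

instance : DecidableRel (JonesSupport (Γ := Γ) (m := m) n) := fun _ _ => by
  unfold JonesSupport; infer_instance

theorem FJones_apply_of_odd (l0 : Γ.Vp → ℝ) (l1 : Γ.Vm → ℝ) (d : ℝ) (hn : n % 2 = 1)
    (x y : Γ.Aug m × Γ.GPath (n + 1)) (h : Γ.BLoopOk m (n + 1) (x, y)) :
    Γ.FJones m l0 l1 d n ⟨(x, y), h⟩ =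
      if JonesSupport n x y then
        ((d * √(l1 (Γ.tgt (Γ.lastEdge x.2)) * l1 (Γ.tgt (Γ.lastEdge y.2)))
          / l0 (Γ.src (Γ.lastEdge x.2)) : ℝ) : ℂ)
      else 0 := by
  simp only [FJones, hn, if_true]
  rfl

def BacktrackHalf (x : Γ.Aug m × Γ.GPath (n + 2)) : Prop :=
  x.1.1 = Γ.pstart x.2 ∧ EndsWithBacktrack x.2

instance : DecidablePred (BacktrackHalf (Γ := Γ) (m := m) (n := n)) := fun _ => by
  unfold BacktrackHalf; infer_instance

def backtrackClass (x : Γ.Aug m × Γ.GPath (n + 2)) : Γ.Aug m × Γ.GPath n :=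
  (x.1, Γ.trunc (Γ.trunc x.2))

theorem bLoopOk_and_jonesSupport_iff (x y : Γ.Aug m × Γ.GPath (2 * k + 1 + 1)) :
    Γ.BLoopOk m _ (x, y) ∧ JonesSupport (2 * k + 1) x y ↔
      backtrackClass x = backtrackClass y ∧ BacktrackHalf x ∧ BacktrackHalf y := by
  constructor
  · rintro ⟨⟨hx, hy, -⟩, ha, hprefix, hlast⟩
    have hbase : x.2.1.1 = y.2.1.1 := hx.symm.trans ((congrArg (·.1) ha).trans hy)
    refine ⟨Prod.ext ha (Subtype.ext (Prod.ext hbase (funext fun i => ?_))), ⟨hx, ?_⟩, ⟨hy, ?_⟩⟩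
    · exact hprefix _ (by simp only [Fin.val_castSucc]; omega)
    · exact (hlast ⟨2 * k, by omega⟩ ⟨2 * k + 1, by omega⟩ rfl rfl).1
    · exact (hlast ⟨2 * k, by omega⟩ ⟨2 * k + 1, by omega⟩ rfl rfl).2
  · rintro ⟨hclass, ⟨hx, hbx⟩, ⟨hy, hby⟩⟩
    have htt : Γ.trunc (Γ.trunc x.2) = Γ.trunc (Γ.trunc y.2) := congrArg Prod.snd hclass
    have hpend : Γ.pend x.2 = Γ.pend y.2 := by
      rw [← pend_trunc_trunc_of_endsWithBacktrack hbx, htt,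
        pend_trunc_trunc_of_endsWithBacktrack hby]
    have ha := congrArg Prod.fst hclass
    refine ⟨⟨hx, hy, hpend⟩, ha, fun i hi => ?_, fun i j hi hj => ?_⟩
    · exact congrArg (fun q : Γ.GPath (2 * k) => q.1.2 ⟨i, by omega⟩) htt
    · rw [show i = ⟨2 * k, by omega⟩ from Fin.ext (show (i : ℕ) = 2 * k by omega),
        show j = ⟨2 * k + 1, by omega⟩ from Fin.ext hj]
      exact ⟨hbx, hby⟩

variable (l0 : Γ.Vp → ℝ) (l1 : Γ.Vm → ℝ)

def jonesVector (x : Γ.Aug m × Γ.GPath (n + 2)) : ℝ :=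
  if BacktrackHalf x then √(l1 (Γ.tgt (Γ.lastEdge x.2)) / l0 (Γ.src (Γ.lastEdge x.2))) else 0

theorem toMatrix_FJones {d : ℝ} (hl0 : ∀ u, 0 ≤ l0 u) (hl1 : ∀ w, 0 ≤ l1 w) :
    toMatrix (Γ.FJones m l0 l1 d (2 * k + 1)) =
      (d : ℂ) • fiberVecMulVec backtrackClass (fun x => (jonesVector l0 l1 x : ℂ)) := by
  ext x y
  simp only [toMatrix, fiberVecMulVec, Matrix.of_apply, Matrix.smul_apply, jonesVector]
  have hodd : (2 * k + 1) % 2 = 1 := by omega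
  by_cases hsupp : Γ.BLoopOk m _ (x, y) ∧ JonesSupport (2 * k + 1) x y
  · obtain ⟨hclass, hx, hy⟩ := (bLoopOk_and_jonesSupport_iff x y).1 hsupp
    rw [dif_pos hsupp.1, FJones_apply_of_odd _ _ _ hodd, if_pos hsupp.2,
      if_pos hclass, if_pos hx, if_pos hy, ← src_lastEdge_eq_of_pend_eq hsupp.1.2.2,
      ← Complex.ofReal_mul, Real.sqrt_div_mul_sqrt_div _ (hl1 _) (hl0 _), smul_eq_mul,
      ← Complex.ofReal_mul, mul_div_assoc]
  · have hzero : ¬ (backtrackClass x = backtrackClass y ∧ BacktrackHalf x ∧ BacktrackHalf y) :=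
      fun h => hsupp ((bLoopOk_and_jonesSupport_iff x y).2 h)
    by_cases hxy : Γ.BLoopOk m _ (x, y)
    · rw [dif_pos hxy, FJones_apply_of_odd _ _ _ hodd, if_neg fun h => hsupp ⟨hxy, h⟩]
      split_ifs <;> simp_all
    · rw [dif_neg hxy]
      split_ifs <;> simp_all

theorem sum_jonesVector_sq_fiber {x : Γ.Aug m × Γ.GPath (2 * k + 1 + 1)}
    (hx : BacktrackHalf x) (hl0 : ∀ u, 0 ≤ l0 u) (hl1 : ∀ w, 0 ≤ l1 w) :
    ∑ y with backtrackClass y = backtrackClass x, jonesVector l0 l1 y ^ 2 =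
      ∑ p with Γ.trunc (Γ.trunc p) = Γ.trunc (Γ.trunc x.2) ∧ EndsWithBacktrack p,
        l1 (Γ.tgt (Γ.lastEdge p)) / l0 (Γ.src (Γ.lastEdge p)) := by
  obtain ⟨a, p⟩ := x
  rw [Finset.sum_filter, Finset.sum_filter, Fintype.sum_prod_type, Fintype.sum_eq_single a]
  · refine Finset.sum_congr rfl fun q _ => ?_
    by_cases hq : Γ.trunc (Γ.trunc q) = Γ.trunc (Γ.trunc p)
    · have hstart : a.1 = Γ.pstart q := hx.1.trans (congrArg Γ.pstart hq).symm
      simp only [backtrackClass, hq, jonesVector, BacktrackHalf, hstart, true_and, if_true]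
      split_ifs
      · exact Real.sq_sqrt (div_nonneg (hl1 _) (hl0 _))
      · exact zero_pow two_ne_zero
    · simp only [backtrackClass, Prod.mk.injEq, hq, and_false, false_and, if_false]
  · intro b hb
    refine Finset.sum_eq_zero fun q _ => ?_
    simp only [backtrackClass, Prod.mk.injEq, hb, false_and, if_false]

theorem sum_jonesVector_sq_fiber_eq_one
    (hrow : ∀ u : Γ.Vp, (∑ ε : Γ.E, if Γ.src ε = u then l1 (Γ.tgt ε) else 0) = l0 u)
    (hl0 : ∀ u, 0 < l0 u) (hl1 : ∀ w, 0 ≤ l1 w)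
    {x : Γ.Aug m × Γ.GPath (2 * k + 1 + 1)} (hx : BacktrackHalf x) :
    ∑ y with backtrackClass y = backtrackClass x, jonesVector l0 l1 y ^ 2 = 1 := by
  set u := Γ.src (Γ.lastEdge x.2)
  rw [sum_jonesVector_sq_fiber l0 l1 hx (fun u => (hl0 u).le) hl1,
    sum_endsWithBacktrack_lastEdge _ (fun ε => l1 (Γ.tgt ε) / l0 (Γ.src ε))]
  calc ∑ ε with Γ.Matches (Γ.trunc (Γ.trunc x.2)) ε, l1 (Γ.tgt ε) / l0 (Γ.src ε)
      = ∑ ε with Γ.src ε = u, l1 (Γ.tgt ε) / l0 u := by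
        refine Finset.sum_congr (Finset.filter_congr fun ε _ => matches_trunc_trunc_iff hx.2 ε)
          fun ε hε => ?_
        rw [(Finset.mem_filter.1 hε).2]
    _ = 1 := by
        rw [← Finset.sum_div, Finset.sum_filter, hrow, div_self (hl0 u).ne']

end BGraph

theorem statement9_general (Γ : BGraph) (m : Γ.Vp → ℕ)
    (l0 : Γ.Vp → ℝ) (l1 : Γ.Vm → ℝ) (d : ℝ)
    (hl0 : ∀ u, 0 < l0 u) (hl1 : ∀ w, 0 < l1 w) (hd : 0 < d)
    (hrow : ∀ u : Γ.Vp, (∑ ε : Γ.E, if Γ.src ε = u then l1 (Γ.tgt ε) else 0) = l0 u)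
    (n : ℕ) (hn : n % 2 = 1) :
    Γ.bmul m ((d : ℂ)⁻¹ • Γ.FJones m l0 l1 d n) ((d : ℂ)⁻¹ • Γ.FJones m l0 l1 d n)
      = (d : ℂ)⁻¹ • Γ.FJones m l0 l1 d n ∧
    Γ.bstar m ((d : ℂ)⁻¹ • Γ.FJones m l0 l1 d n) = (d : ℂ)⁻¹ • Γ.FJones m l0 l1 d n := by
  obtain ⟨k, rfl⟩ : ∃ k, n = 2 * k + 1 := ⟨n / 2, by omega⟩
  set P := fiberVecMulVec BGraph.backtrackClass fun x : Γ.Aug m × Γ.GPath (2 * k + 1 + 1) =>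
    (BGraph.jonesVector l0 l1 x : ℂ)
  have hmatrix : BGraph.toMatrix ((d : ℂ)⁻¹ • Γ.FJones m l0 l1 d (2 * k + 1)) = P := by
    rw [BGraph.toMatrix_smul, BGraph.toMatrix_FJones l0 l1 (fun u => (hl0 u).le)
      (fun w => (hl1 w).le), smul_smul, inv_mul_cancel₀ (Complex.ofReal_ne_zero.2 hd.ne'),
      one_smul]
  have hidem : P * P = P := fiberVecMulVec_mul_self _ _ fun x hx => by
    have hbx : BGraph.BacktrackHalf x := by
      by_contra h
      simp [BGraph.jonesVector, h] at hx
    exact_mod_cast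
      BGraph.sum_jonesVector_sq_fiber_eq_one l0 l1 hrow hl0 (fun w => (hl1 w).le) hbx
  have hherm : P.conjTranspose = P := by
    rw [conjTranspose_fiberVecMulVec]
    congr
    funext x
    exact Complex.conj_ofReal _
  constructor
  · apply BGraph.toMatrix_injective
    rw [BGraph.toMatrix_bmul, hmatrix, hidem]
  · apply BGraph.toMatrix_injective
    rw [BGraph.toMatrix_bstar, hmatrix, hherm]

/-- For `n` odd, with
`F_n = ∑_ℓ ∑_{ε_n,ε_{n+1}} d [λ¹(t(ε_n))λ¹(t(ε_{n+1}))]^{1/2} / λ⁰(s(ε_n)) ·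
[ℓ ε_n ε_n* ε_{n+1} ε_{n+1}* ℓ*] ∈ B_{n+1}`, the element `d⁻¹F_n` is a
self-adjoint idempotent. -/
theorem statement9 (Γ : BGraph) (hconn : Γ.Conn) (m : Γ.Vp → ℕ)
    (hm : ∀ v, 0 < m v)
    (l0 : Γ.Vp → ℝ) (l1 : Γ.Vm → ℝ) (d : ℝ)
    (hl0 : ∀ u, 0 < l0 u) (hl1 : ∀ w, 0 < l1 w) (hd : 0 < d)
    (hrow : ∀ u : Γ.Vp, (∑ ε : Γ.E, if Γ.src ε = u then l1 (Γ.tgt ε) else 0) = l0 u)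
    (n : ℕ) (hn : n % 2 = 1) :
    Γ.bmul m ((d : ℂ)⁻¹ • Γ.FJones m l0 l1 d n) ((d : ℂ)⁻¹ • Γ.FJones m l0 l1 d n)
      = (d : ℂ)⁻¹ • Γ.FJones m l0 l1 d n ∧
    Γ.bstar m ((d : ℂ)⁻¹ • Γ.FJones m l0 l1 d n) = (d : ℂ)⁻¹ • Γ.FJones m l0 l1 d n :=
  statement9_general Γ m l0 l1 d hl0 hl1 hd hrow n hn
end
end

section
/- In the tower (B_n) of loop algebras of the augmented graph Γ̃, the relative commutant B₀' ∩ B_n has linear basis { Σ_{t(η)=s(ℓ₁)} [η ℓ₁ ℓ₂* η*] : ℓ₁, ℓ₂ paths of length n in Γ from even vertices with s(ℓ₁)=s(ℓ₂), t(ℓ₁)=t(ℓ₂) }, and the map sending this basis element to [ℓ₁ℓ₂*] is a *-algebra isomorphism from B₀' ∩ B_n onto the loop algebra G_{n,+}. -/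
noncomputable section

open scoped BigOperators

/-- The map `G_{n,+} → B_n` sending the loop `[ℓ₁ℓ₂*]` to
`∑_{t(η)=s(ℓ₁)} [ηℓ₁ℓ₂*η*]`. -/
def commMap (Γ : BGraph) (m : Γ.Vp → ℕ) (n : ℕ) (y : Γ.LoopAlg n) :
    Γ.BAlg m n := fun L =>
  if h : L.1.1.1 = L.1.2.1 then
    y ⟨(L.1.1.2, L.1.2.2), ⟨by rw [← L.2.1, ← L.2.2.1, h], L.2.2.2⟩⟩
  else 0

/-!
Elements of `B_n` are matrices indexed by pairs `(η, ℓ)` of an augmentation edge and a path,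
and elements of `G_{n,+}` are matrices indexed by paths; in both, multiplication is the matrix
product. The iterated inclusion of `B₀` acts as `b ⊗ 1`: the `((η, ℓ₁), (ρ, ℓ₂))` entry of
`ι(b)` is `δ_{ℓ₁ℓ₂} b_{ηρ}`. Commuting with the matrix units `e_{ηρ}` of `B₀` (with `η`, `ρ` over
the same vertex) forces an element to be diagonal in the augmentation index and constant along
the augmentation edges over each vertex, i.e. to be `commMap y`, where `y` is read off at one
augmentation edge over each vertex (one exists since `m v > 0`). That `commMap` is injective,
multiplicative and `*`-preserving is then an entrywise computation.
-/

namespace BGraph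

variable {Γ : BGraph} {m : Γ.Vp → ℕ} {n : ℕ}

def mkPath0 (v : Γ.Vp) : Γ.GPath 0 :=
  ⟨(v, Fin.elim0), fun i _ => i.elim0, fun i _ _ => i.elim0⟩

theorem eq_mkPath0 (p : Γ.GPath 0) : p = mkPath0 (Γ.pstart p) :=
  Subtype.ext (Prod.ext rfl (funext fun i => i.elim0))

theorem mkPath0_injective : Function.Injective (mkPath0 : Γ.Vp → Γ.GPath 0) :=
  fun _ _ h => congrArg (fun p : Γ.GPath 0 => p.1.1) h

theorem eq_iff_trunc_eq_and_lastEdge_eq {p q : Γ.GPath (n+1)} :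
    p = q ↔ Γ.trunc p = Γ.trunc q ∧ Γ.lastEdge p = Γ.lastEdge q := by
  refine ⟨fun h => h ▸ ⟨rfl, rfl⟩, fun ⟨ht, hl⟩ => Subtype.ext (Prod.ext ?_ ?_)⟩
  · exact congrArg (fun r : Γ.GPath n => r.1.1) ht
  · funext i
    induction i using Fin.lastCases with
    | last => exact hl
    | cast i => exact congrFun (congrArg (fun r : Γ.GPath n => r.1.2) ht) i

theorem BLoopOk.symm {u v : Γ.Aug m × Γ.GPath n} (h : Γ.BLoopOk m n (u, v)) :
    Γ.BLoopOk m n (v, u) :=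
  ⟨h.2.1, h.1, h.2.2.symm⟩

theorem BLoopOk.trans {u v w : Γ.Aug m × Γ.GPath n} (huv : Γ.BLoopOk m n (u, v))
    (hvw : Γ.BLoopOk m n (v, w)) : Γ.BLoopOk m n (u, w) :=
  ⟨huv.1, hvw.2.1, huv.2.2.trans hvw.2.2⟩

instance inst_s19 : DecidablePred (Γ.BLoopOk m n) := fun _ => by
  unfold BLoopOk; infer_instance

/-- Entries are extended by zero off the loops, so that `bmul` and `lmul` become plain matrix
products (`bEntry_bmul`, `lEntry_lmul`). -/
def bEntry (x : Γ.BAlg m n) (u v : Γ.Aug m × Γ.GPath n) : ℂ :=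
  if h : Γ.BLoopOk m n (u, v) then x ⟨(u, v), h⟩ else 0

def lEntry (y : Γ.LoopAlg n) (p q : Γ.GPath n) : ℂ :=
  if h : Γ.pstart p = Γ.pstart q ∧ Γ.pend p = Γ.pend q then y ⟨(p, q), h⟩ else 0

theorem bEntry_coe (x : Γ.BAlg m n) (L : Γ.BLoop m n) : bEntry x L.1.1 L.1.2 = x L :=
  dif_pos L.2

theorem lEntry_coe (y : Γ.LoopAlg n) (q : Γ.GLoop n) : lEntry y q.1.1 q.1.2 = y q :=
  dif_pos q.2

theorem bEntry_injective : Function.Injective (bEntry : Γ.BAlg m n → _) :=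
  fun x y h => funext fun L => by rw [← bEntry_coe x L, h, bEntry_coe]

theorem lEntry_injective : Function.Injective (lEntry : Γ.LoopAlg n → _) :=
  fun x y h => funext fun q => by rw [← lEntry_coe x q, h, lEntry_coe]

theorem bEntry_ext {x y : Γ.BAlg m n}
    (h : ∀ η p ρ q, bEntry x (η, p) (ρ, q) = bEntry y (η, p) (ρ, q)) : x = y :=
  bEntry_injective (funext₂ fun u v => h u.1 u.2 v.1 v.2)

theorem bEntry_of_not_bLoopOk (x : Γ.BAlg m n) {u v : Γ.Aug m × Γ.GPath n}
    (h : ¬ Γ.BLoopOk m n (u, v)) : bEntry x u v = 0 :=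
  dif_neg h

theorem lEntry_of_pstart_ne (y : Γ.LoopAlg n) {p q : Γ.GPath n}
    (h : Γ.pstart p ≠ Γ.pstart q) : lEntry y p q = 0 :=
  dif_neg fun h' => h h'.1

theorem bEntry_bmul (x y : Γ.BAlg m n) (u v : Γ.Aug m × Γ.GPath n) :
    bEntry (Γ.bmul m x y) u v = ∑ a, ∑ p, bEntry x u (a, p) * bEntry y (a, p) v := by
  by_cases huv : Γ.BLoopOk m n (u, v)
  · rw [bEntry, dif_pos huv]
    refine Finset.sum_congr rfl fun a _ => Finset.sum_congr rfl fun p _ => ?_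
    by_cases h : a.1 = Γ.pstart p ∧ Γ.pend u.2 = Γ.pend p
    · rw [dif_pos h, bEntry, bEntry, dif_pos ⟨huv.1, h⟩,
        dif_pos ⟨h.1, huv.2.1, h.2.symm.trans huv.2.2⟩]
    · rw [dif_neg h, bEntry_of_not_bLoopOk x fun h' => h h'.2, zero_mul]
  · rw [bEntry_of_not_bLoopOk _ huv]
    refine (Finset.sum_eq_zero fun a _ => Finset.sum_eq_zero fun p _ => ?_).symm
    by_cases h : Γ.BLoopOk m n (u, (a, p))
    · rw [bEntry_of_not_bLoopOk y fun h' => huv (h.trans h'), mul_zero]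
    · rw [bEntry_of_not_bLoopOk x h, zero_mul]

theorem lEntry_lmul (x y : Γ.LoopAlg n) (p q : Γ.GPath n) :
    lEntry (Γ.lmul x y) p q = ∑ r, lEntry x p r * lEntry y r q := by
  by_cases hpq : Γ.pstart p = Γ.pstart q ∧ Γ.pend p = Γ.pend q
  · rw [lEntry, dif_pos hpq]
    refine Finset.sum_congr rfl fun r _ => ?_
    by_cases h : Γ.pstart p = Γ.pstart r ∧ Γ.pend p = Γ.pend r
    · rw [dif_pos h, lEntry, lEntry, dif_pos h,
        dif_pos ⟨h.1.symm.trans hpq.1, h.2.symm.trans hpq.2⟩]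
    · rw [dif_neg h, lEntry, dif_neg h, zero_mul]
  · rw [lEntry, dif_neg hpq]
    refine (Finset.sum_eq_zero fun r _ => ?_).symm
    by_cases h : Γ.pstart p = Γ.pstart r ∧ Γ.pend p = Γ.pend r
    · rw [show lEntry y r q = 0 from dif_neg fun h' => hpq ⟨h.1.trans h'.1, h.2.trans h'.2⟩,
        mul_zero]
    · rw [lEntry, dif_neg h, zero_mul]

theorem bEntry_bstar (x : Γ.BAlg m n) (u v : Γ.Aug m × Γ.GPath n) :
    bEntry (Γ.bstar m x) u v = starRingEnd ℂ (bEntry x v u) := by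
  by_cases h : Γ.BLoopOk m n (u, v)
  · rw [bEntry, bEntry, dif_pos h, dif_pos h.symm]
    rfl
  · rw [bEntry_of_not_bLoopOk _ h, bEntry_of_not_bLoopOk _ fun h' => h h'.symm, map_zero]

theorem lEntry_lstar (y : Γ.LoopAlg n) (p q : Γ.GPath n) :
    lEntry (Γ.lstar y) p q = starRingEnd ℂ (lEntry y q p) := by
  by_cases h : Γ.pstart p = Γ.pstart q ∧ Γ.pend p = Γ.pend q
  · rw [lEntry, lEntry, dif_pos h, dif_pos ⟨h.1.symm, h.2.symm⟩]
    rfl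
  · rw [lEntry, lEntry, dif_neg h, dif_neg fun h' => h ⟨h'.1.symm, h'.2.symm⟩, map_zero]

def augEntry (b : Γ.BAlg m 0) (η ρ : Γ.Aug m) : ℂ :=
  bEntry b (η, mkPath0 η.1) (ρ, mkPath0 ρ.1)

theorem augEntry_of_ne (b : Γ.BAlg m 0) {η ρ : Γ.Aug m} (h : η.1 ≠ ρ.1) :
    augEntry b η ρ = 0 :=
  bEntry_of_not_bLoopOk b fun h' => h (Sum.inl.inj h'.2.2)

theorem bEntry_bincl (x : Γ.BAlg m n) (u v : Γ.Aug m × Γ.GPath (n+1)) :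
    bEntry (Γ.bincl m x) u v =
      if Γ.lastEdge u.2 = Γ.lastEdge v.2 then bEntry x (u.1, Γ.trunc u.2) (v.1, Γ.trunc v.2)
      else 0 := by
  by_cases h : Γ.BLoopOk m n.succ (u, v)
  · rw [bEntry, dif_pos h]
    unfold bincl
    split_ifs with hl
    · rw [bEntry, dif_pos ⟨h.1, h.2.1, Γ.pend_trunc_of_last_eq _ _ h.2.2 hl⟩]
    · rfl
  · rw [bEntry_of_not_bLoopOk _ h]
    split_ifs with hl
    · refine (bEntry_of_not_bLoopOk x fun ht => h ⟨ht.1, ht.2.1, ?_⟩).symm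
      rw [pend_eq_last, pend_eq_last, hl]
    · rfl

theorem bEntry_mkPath0 (b : Γ.BAlg m 0) (η ρ : Γ.Aug m) (a c : Γ.Vp) :
    bEntry b (η, mkPath0 a) (ρ, mkPath0 c) =
      if a = c ∧ η.1 = a then augEntry b η ρ else 0 := by
  by_cases hη : η.1 = a
  · subst hη
    by_cases hρ : ρ.1 = c
    · subst hρ
      by_cases hηρ : η.1 = ρ.1
      · rw [if_pos ⟨hηρ, rfl⟩]
        rfl
      · rw [if_neg fun h => hηρ h.1]
        exact augEntry_of_ne b hηρ
    · rw [bEntry_of_not_bLoopOk _ fun h => hρ h.2.1]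
      split_ifs with h
      · exact (augEntry_of_ne b fun e => hρ (e.symm.trans h.1)).symm
      · rfl
  · rw [bEntry_of_not_bLoopOk _ fun h => hη h.1, if_neg fun h => hη h.2]

theorem bEntry_binclLe (b : Γ.BAlg m 0) (η ρ : Γ.Aug m) (p q : Γ.GPath n) :
    bEntry (Γ.binclLe m (Nat.zero_le n) b) (η, p) (ρ, q) =
      if p = q ∧ η.1 = Γ.pstart p then augEntry b η ρ else 0 := by
  induction n with
  | zero =>
    rw [show Γ.binclLe m (Nat.zero_le 0) b = b from Nat.leRecOn_self b,
      eq_mkPath0 p, eq_mkPath0 q, bEntry_mkPath0]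
    simp only [mkPath0_injective.eq_iff]
    rfl
  | succ k ih =>
    rw [show Γ.binclLe m (Nat.zero_le (k+1)) b = Γ.bincl m (Γ.binclLe m (Nat.zero_le k) b)
      from Nat.leRecOn_succ (Nat.zero_le k) b, bEntry_bincl]
    by_cases hl : Γ.lastEdge p = Γ.lastEdge q
    · simp only [ih, eq_iff_trunc_eq_and_lastEdge_eq (p := p), hl, and_true]
      rfl
    · rw [if_neg hl, if_neg fun h => hl (congrArg _ h.1)]

theorem bEntry_bmul_binclLe_left (b : Γ.BAlg m 0) (x : Γ.BAlg m n) (η : Γ.Aug m) (p : Γ.GPath n)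
    (v : Γ.Aug m × Γ.GPath n) :
    bEntry (Γ.bmul m (Γ.binclLe m (Nat.zero_le n) b) x) (η, p) v =
      ∑ a, augEntry b η a * bEntry x (a, p) v := by
  rw [bEntry_bmul]
  refine Finset.sum_congr rfl fun a _ => ?_
  simp only [bEntry_binclLe, ite_mul, zero_mul, ite_and, Finset.sum_ite_eq, Finset.mem_univ,
    if_true]
  split_ifs with hη
  · rfl
  · by_cases ha : a.1 = η.1
    · rw [bEntry_of_not_bLoopOk x fun h => hη (ha ▸ h.1), mul_zero]
    · rw [augEntry_of_ne b fun h => ha h.symm, zero_mul]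

theorem bEntry_bmul_binclLe_right (b : Γ.BAlg m 0) (x : Γ.BAlg m n) (u : Γ.Aug m × Γ.GPath n)
    (ρ : Γ.Aug m) (q : Γ.GPath n) :
    bEntry (Γ.bmul m x (Γ.binclLe m (Nat.zero_le n) b)) u (ρ, q) =
      ∑ a, bEntry x u (a, q) * augEntry b a ρ := by
  rw [bEntry_bmul]
  refine Finset.sum_congr rfl fun a _ => ?_
  simp only [bEntry_binclLe, mul_ite, mul_zero, ite_and, Finset.sum_ite_eq', Finset.mem_univ,
    if_true]
  split_ifs with ha
  · rfl
  · rw [bEntry_of_not_bLoopOk x fun h => ha h.2.1, zero_mul]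

def bUnit (η ρ : Γ.Aug m) : Γ.BAlg m 0 := fun M =>
  if M.1.1.1 = η ∧ M.1.2.1 = ρ then 1 else 0

theorem augEntry_bUnit {η ρ : Γ.Aug m} (h : η.1 = ρ.1) (α β : Γ.Aug m) :
    augEntry (bUnit η ρ) α β = if α = η ∧ β = ρ then 1 else 0 := by
  by_cases hαβ : α = η ∧ β = ρ
  · obtain ⟨rfl, rfl⟩ := hαβ
    rw [augEntry, bEntry, dif_pos ⟨rfl, rfl, congrArg Sum.inl h⟩]
    rfl
  · rw [if_neg hαβ, augEntry, bEntry]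
    split_ifs
    · exact if_neg hαβ
    · rfl

theorem bEntry_eq_of_commute_bUnit {x : Γ.BAlg m n}
    {η' ρ' : Γ.Aug m} (h : η'.1 = ρ'.1)
    (hx : Γ.bmul m (Γ.binclLe m (Nat.zero_le n) (bUnit η' ρ')) x =
      Γ.bmul m x (Γ.binclLe m (Nat.zero_le n) (bUnit η' ρ'))) (η ρ : Γ.Aug m) (p q : Γ.GPath n) :
    (if η = η' then bEntry x (ρ', p) (ρ, q) else 0) =
      if ρ = ρ' then bEntry x (η, p) (η', q) else 0 := by
  have := congrArg (fun z => bEntry z (η, p) (ρ, q)) hx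
  simpa [bEntry_bmul_binclLe_left, bEntry_bmul_binclLe_right, augEntry_bUnit h, ite_and] using this

end BGraph

open BGraph

section commMap

variable {Γ : BGraph} {m : Γ.Vp → ℕ} {n : ℕ}

theorem bEntry_commMap (y : Γ.LoopAlg n) (η ρ : Γ.Aug m) (p q : Γ.GPath n) :
    bEntry (commMap Γ m n y) (η, p) (ρ, q) =
      if η = ρ ∧ η.1 = Γ.pstart p then lEntry y p q else 0 := by
  by_cases h : Γ.BLoopOk m n ((η, p), (ρ, q))
  · rw [bEntry, dif_pos h]
    unfold commMap
    by_cases hηρ : η = ρ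
    · rw [dif_pos hηρ, if_pos ⟨hηρ, h.1⟩, lEntry, dif_pos]
    · rw [dif_neg hηρ, if_neg fun h' => hηρ h'.1]
  · rw [bEntry_of_not_bLoopOk _ h]
    split_ifs with hc
    · obtain ⟨rfl, hη⟩ := hc
      rw [lEntry, dif_neg]
      rintro ⟨hs, he⟩
      exact h ⟨hη, hη.trans hs, he⟩
    · rfl

theorem commMap_smul_add (c : ℂ) (x y : Γ.LoopAlg n) :
    commMap Γ m n (c • x + y) = c • commMap Γ m n x + commMap Γ m n y := by
  funext L
  simp only [commMap, Pi.add_apply, Pi.smul_apply, smul_eq_mul]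
  split
  · rfl
  · simp

theorem commMap_lmul (x y : Γ.LoopAlg n) :
    commMap Γ m n (Γ.lmul x y) = Γ.bmul m (commMap Γ m n x) (commMap Γ m n y) := by
  refine bEntry_ext fun η p ρ q => ?_
  rw [bEntry_bmul, Finset.sum_eq_single η (fun a _ ha => by simp [bEntry_commMap, Ne.symm ha])
    (by simp)]
  simp only [bEntry_commMap, lEntry_lmul, true_and]
  by_cases h : η = ρ ∧ η.1 = Γ.pstart p
  · obtain ⟨rfl, hs⟩ := h
    rw [if_pos ⟨rfl, hs⟩]
    refine Finset.sum_congr rfl fun r _ => ?_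
    by_cases hr : η.1 = Γ.pstart r
    · rw [if_pos hs, if_pos ⟨rfl, hr⟩]
    · rw [lEntry_of_pstart_ne x fun e => hr (hs.trans e), zero_mul, if_pos hs, zero_mul]
  · refine (if_neg h).trans (Finset.sum_eq_zero fun r _ => ?_).symm
    by_cases hs : η.1 = Γ.pstart p
    · rw [if_pos hs, if_neg fun h' => h ⟨h'.1, hs⟩, mul_zero]
    · rw [if_neg hs, zero_mul]

theorem commMap_lstar (y : Γ.LoopAlg n) :
    commMap Γ m n (Γ.lstar y) = Γ.bstar m (commMap Γ m n y) := by
  refine bEntry_ext fun η p ρ q => ?_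
  rw [bEntry_bstar, bEntry_commMap, bEntry_commMap, lEntry_lstar]
  by_cases hηρ : η = ρ
  · subst hηρ
    by_cases hp : η.1 = Γ.pstart p <;> by_cases hq : η.1 = Γ.pstart q
    · rw [if_pos ⟨rfl, hp⟩, if_pos ⟨rfl, hq⟩]
    · rw [if_pos ⟨rfl, hp⟩, if_neg fun h => hq h.2,
        lEntry_of_pstart_ne y fun e => hq (hp.trans e.symm), map_zero]
    · rw [if_neg fun h => hp h.2, if_pos ⟨rfl, hq⟩,
        lEntry_of_pstart_ne y fun e => hp (hq.trans e), map_zero]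
    · rw [if_neg fun h => hp h.2, if_neg fun h => hq h.2, map_zero]
  · rw [if_neg fun h => hηρ h.1, if_neg fun h => hηρ h.1.symm, map_zero]

theorem commMap_commute_binclLe (y : Γ.LoopAlg n) (b : Γ.BAlg m 0) :
    Γ.bmul m (Γ.binclLe m (Nat.zero_le n) b) (commMap Γ m n y) =
      Γ.bmul m (commMap Γ m n y) (Γ.binclLe m (Nat.zero_le n) b) := by
  refine bEntry_ext fun η p ρ q => ?_
  simp only [bEntry_bmul_binclLe_left, bEntry_bmul_binclLe_right, bEntry_commMap, mul_ite,
    ite_mul, mul_zero, zero_mul, ite_and, Finset.sum_ite_eq, Finset.sum_ite_eq',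
    Finset.mem_univ, if_true]
  by_cases hηρ : η.1 = ρ.1
  · rw [hηρ, mul_comm]
  · simp only [augEntry_of_ne b hηρ, zero_mul, mul_zero, ite_self]

def baseAug (hm : ∀ v, 0 < m v) (v : Γ.Vp) : Γ.Aug m := ⟨v, ⟨0, hm v⟩⟩

@[simp]
theorem baseAug_fst (hm : ∀ v, 0 < m v) (v : Γ.Vp) : (baseAug hm v).1 = v := rfl

theorem commMap_injective (hm : ∀ v, 0 < m v) : Function.Injective (commMap Γ m n) := by
  intro x y hxy
  refine lEntry_injective (funext₂ fun p q => ?_)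
  have := congrArg (fun z => bEntry z (baseAug hm (Γ.pstart p), p) (baseAug hm (Γ.pstart p), q)) hxy
  simpa only [bEntry_commMap, baseAug_fst, and_self, if_true] using this

theorem mem_range_commMap (hm : ∀ v, 0 < m v) {x : Γ.BAlg m n}
    (hx : ∀ b : Γ.BAlg m 0, Γ.bmul m (Γ.binclLe m (Nat.zero_le n) b) x =
      Γ.bmul m x (Γ.binclLe m (Nat.zero_le n) b)) :
    x ∈ Set.range (commMap Γ m n) := by
  set base := fun p : Γ.GPath n => baseAug hm (Γ.pstart p)
  refine ⟨fun ℓ => bEntry x (base ℓ.1.1, ℓ.1.1) (base ℓ.1.1, ℓ.1.2),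
    bEntry_ext fun η p ρ q => ?_⟩
  rw [bEntry_commMap]
  by_cases hηρ : η = ρ
  · subst hηρ
    by_cases hs : η.1 = Γ.pstart p
    · have hy : lEntry (fun ℓ => bEntry x (base ℓ.1.1, ℓ.1.1) (base ℓ.1.1, ℓ.1.2)) p q =
          bEntry x (base p, p) (base p, q) := by
        unfold lEntry
        split_ifs with h
        · rfl
        · exact (bEntry_of_not_bLoopOk x fun h' => h ⟨h'.2.1, h'.2.2⟩).symm
      have := bEntry_eq_of_commute_bUnit (ρ' := base p)
        (hs.trans (baseAug_fst hm _).symm) (hx _) η (base p) p q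
      simpa [hy, hs] using this
    · rw [if_neg fun h => hs h.2, bEntry_of_not_bLoopOk x fun h => hs h.1]
  · have := bEntry_eq_of_commute_bUnit (η' := η) rfl (hx _) η ρ p q
    simpa [hηρ, Ne.symm hηρ, eq_comm] using this

end commMap

theorem statement19_general (Γ : BGraph) (m : Γ.Vp → ℕ)
    (hm : ∀ v, 0 < m v) (n : ℕ) :
    Function.Injective (commMap Γ m n) ∧
    (∀ (c : ℂ) (x y : Γ.LoopAlg n),
      commMap Γ m n (c • x + y) = c • commMap Γ m n x + commMap Γ m n y) ∧
    (∀ x y : Γ.LoopAlg n,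
      commMap Γ m n (Γ.lmul x y) = Γ.bmul m (commMap Γ m n x) (commMap Γ m n y)) ∧
    (∀ x : Γ.LoopAlg n,
      commMap Γ m n (Γ.lstar x) = Γ.bstar m (commMap Γ m n x)) ∧
    Set.range (commMap Γ m n) =
      {x : Γ.BAlg m n | ∀ b : Γ.BAlg m 0,
        Γ.bmul m (Γ.binclLe m (Nat.zero_le n) b) x =
        Γ.bmul m x (Γ.binclLe m (Nat.zero_le n) b)} := by
  refine ⟨commMap_injective hm, commMap_smul_add, commMap_lmul, commMap_lstar,
    Set.Subset.antisymm ?_ fun x hx => mem_range_commMap hm hx⟩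
  rintro _ ⟨y, rfl⟩ b
  exact commMap_commute_binclLe y b

/-- The relative commutant `B₀' ∩ B_n` has linear basis
`{∑_{t(η)=s(ℓ₁)} [ηℓ₁ℓ₂*η*]}` indexed by the loops `[ℓ₁ℓ₂*]` of `G_{n,+}`,
and `[ℓ₁ℓ₂*] ↦ ∑_η [ηℓ₁ℓ₂*η*]` is a `*`-algebra isomorphism of `G_{n,+}` onto
`B₀' ∩ B_n`: it is linear, injective, multiplicative, `*`-preserving, and its
range is exactly the commutant of `B₀` in `B_n`. -/
theorem statement19 (Γ : BGraph) (hconn : Γ.Conn) (m : Γ.Vp → ℕ)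
    (hm : ∀ v, 0 < m v) (n : ℕ) :
    Function.Injective (commMap Γ m n) ∧
    (∀ (c : ℂ) (x y : Γ.LoopAlg n),
      commMap Γ m n (c • x + y) = c • commMap Γ m n x + commMap Γ m n y) ∧
    (∀ x y : Γ.LoopAlg n,
      commMap Γ m n (Γ.lmul x y) = Γ.bmul m (commMap Γ m n x) (commMap Γ m n y)) ∧
    (∀ x : Γ.LoopAlg n,
      commMap Γ m n (Γ.lstar x) = Γ.bstar m (commMap Γ m n x)) ∧
    Set.range (commMap Γ m n) =
      {x : Γ.BAlg m n | ∀ b : Γ.BAlg m 0,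
        Γ.bmul m (Γ.binclLe m (Nat.zero_le n) b) x =
        Γ.bmul m x (Γ.binclLe m (Nat.zero_le n) b)} :=
  statement19_general Γ m hm n
end
end
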